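/- Assume q is uniformly Lipschitz continuous in (μ,a) with Lipschitz constant L_q. Then for any L ≥ 0 there exists a constant C_L, depending only on T, |𝕊|, L_q and L, such that for any t ∈ 𝕋, x⃗ ∈ 𝕊^N₀, μ ∈ 𝒫₀(𝕊), α, α̃ ∈ 𝒜^L_state, s ≥ t and i ∈ {1,…,N}: (i) E^{ℙ^{t,x⃗,(α,α̃)_i}}[ W₁(μ^N_s, μ^α_s) ] ≤ C_L θ_N, and (ii) W₁( ℙ^{t,x⃗,(α,α̃)_i}∘(X^i_s)^{−1}, ℙ^{μ^α;t,x_i,α̃}∘X_s^{−1} ) ≤ C_L θ_N, where θ_N := W₁(μ^N_{x⃗},μ) + 1/√N. -/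

import Mathlib

/-!
Statement 3 (Theorem 3.3, convergence of empirical measures for the `N`-player game
with homogeneous controls).

Finite-state mean field game; probability measures on the finite state space `S`
are encoded as functions `S → ℝ` (`IsProb`), with `W₁(μ,ν) = ∑_x |μ x − ν x|`.
Controls may depend on the current measure: `α : ℕ → S → (S → ℝ) → A`, and
`𝒜^L_state` is the class of such controls that are `L`-Lipschitz in the measure.
-/

open Finset

namespace MFGSetValue

variable {S A : Type*} [Fintype S] [DecidableEq S]

/-- A probability vector on the finite state space `S`. -/
def IsProb (μ : S → ℝ) : Prop := (∀ x, 0 ≤ μ x) ∧ ∑ x, μ x = 1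

/-- `W₁` distance (total-variation type) between two measures on `S`. -/
noncomputable def W1 (μ ν : S → ℝ) : ℝ := ∑ x, |μ x - ν x|

section Metric
variable [PseudoMetricSpace A]

/-- `α ∈ 𝒜^L_state`: measure-dependent controls, `L`-Lipschitz in the measure. -/
def LipCtrl (L : ℝ) (α : ℕ → S → (S → ℝ) → A) : Prop :=
  ∀ s x μ ν, dist (α s x μ) (α s x ν) ≤ L * W1 μ ν

end Metric

/-- The mean-field measure flow `μ^α` for a measure-dependent control `α`:
`μ^α_t = μ`, `μ^α_{s+1}(y) = ∑_x μ^α_s(x) q(s,x,μ^α_s,α(s,x,μ^α_s);y)`. -/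
noncomputable def flowM (q : ℕ → S → (S → ℝ) → A → S → ℝ)
    (α : ℕ → S → (S → ℝ) → A) (t : ℕ) (μ : S → ℝ) : ℕ → S → ℝ
  | 0 => μ
  | s + 1 =>
    if s + 1 ≤ t then μ
    else fun y => ∑ x, flowM q α t μ s x *
      q s x (flowM q α t μ s) (α s x (flowM q α t μ s)) y

/-- The law at each time of the Markov chain `ℙ^{μ^α; t, x₀, α̃}` started from `x₀`
at time `t`, with transitions `q(s,·,ν_s,α̃(s,·,ν_s);·)` against the flow `ν`. -/
noncomputable def chainM (q : ℕ → S → (S → ℝ) → A → S → ℝ) (ν : ℕ → S → ℝ)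
    (αt : ℕ → S → (S → ℝ) → A) (t : ℕ) (x₀ : S) : ℕ → S → ℝ
  | 0 => fun x => if x = x₀ then 1 else 0
  | s + 1 =>
    if s + 1 ≤ t then fun x => if x = x₀ then 1 else 0
    else fun y => ∑ x, chainM q ν αt t x₀ s x * q s x (ν s) (αt s x (ν s)) y

/-- The empirical measure `μ^N_{x⃗}` of a configuration `x⃗ ∈ 𝕊^N`. -/
noncomputable def emp {N : ℕ} (xv : Fin N → S) : S → ℝ :=
  fun x => (∑ i, if xv i = x then (1 : ℝ) else 0) / N

/-- The joint law `ℙ^{t,x⃗,α⃗}` of the `N`-player state process: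
`X⃗_t = x⃗` and independent transitions `q(s, x_i, μ^N_s, α^i(s,x_i,μ^N_s); ·)`. -/
noncomputable def jointFlow (q : ℕ → S → (S → ℝ) → A → S → ℝ) {N : ℕ}
    (αv : Fin N → ℕ → S → (S → ℝ) → A) (t : ℕ) (xv : Fin N → S) :
    ℕ → (Fin N → S) → ℝ
  | 0 => fun z => if z = xv then 1 else 0
  | s + 1 =>
    if s + 1 ≤ t then fun z => if z = xv then 1 else 0
    else fun z => ∑ w : Fin N → S, jointFlow q αv t xv s w *
      ∏ i, q s (w i) (emp w) (αv i s (w i) (emp w)) (z i)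

/-- The `N`-tuple `(α, α̃)_i`: player `i` uses `α̃`, all others use `α`. -/
def replaceI {N : ℕ} (α αt : ℕ → S → (S → ℝ) → A) (i : Fin N) :
    Fin N → ℕ → S → (S → ℝ) → A :=
  fun j => if j = i then αt else α

end MFGSetValue

open MFGSetValue

/-!
Write `D u` for the expected `W₁`-distance between the empirical measure of the `N`-player
system and the mean-field flow `μ^α_u`, and `E u` for the `W₁`-distance between the law of
player `i` and the law of the mean-field chain driven by `α̃`. Given the configuration `w` at
time `u`, the players move independently, so a second-moment bound state by state puts the new
empirical measure within `|S|/√N` (in expectation) of the average of the players' transition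
laws. That average is one mean-field step from `μ^N_w` up to the deviating player `i`, who
carries weight `1/N`, and one mean-field step from `μ^N_w` differs from one from `μ^α_u` by
`(1 + K) W₁(μ^N_w, μ^α_u)`, `K = |S| |L_q| (1 + |L|)`, since `q` and the controls are
Lipschitz in the measure. Hence `D (u+1) ≤ (1 + K) D u + (|S| + 2)/√N` and, comparing the
two one-step transitions of player `i` the same way, `E (u+1) ≤ K D u + E u`. Starting from
`D t = W₁(μ^N_x, μ)` and `E t = 0`, a discrete Grönwall argument gives both bounds.
-/

namespace MFGSetValue

lemma le_pow_mul_of_recursion {D E : ℕ → ℝ} {a b c θ : ℝ} {t : ℕ} (ha : 0 ≤ a)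
    (hb : 0 ≤ b) (hc : 0 ≤ c) (hθ : 0 ≤ θ) (hD₀ : D t ≤ θ) (hE₀ : E t ≤ θ)
    (hD : ∀ u, t ≤ u → D (u + 1) ≤ a * D u + c * θ)
    (hE : ∀ u, t ≤ u → E (u + 1) ≤ b * D u + E u) {s : ℕ} (hs : t ≤ s) :
    D s ≤ (a + b + c + 1) ^ (s - t) * θ ∧ E s ≤ (a + b + c + 1) ^ (s - t) * θ := by
  induction s, hs using Nat.le_induction with
  | base => simpa using ⟨hD₀, hE₀⟩
  | succ u hu ih =>
    set X := (a + b + c + 1) ^ (u - t) * θ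
    have hθX : θ ≤ X := le_mul_of_one_le_left hθ (one_le_pow₀ (by linarith))
    have hX : (a + b + c + 1) ^ (u + 1 - t) * θ = (a + b + c + 1) * X := by
      rw [show u + 1 - t = u - t + 1 by omega, pow_succ]
      ring
    rw [hX]
    have h1 := mul_le_mul_of_nonneg_left ih.1 ha
    have h2 := mul_le_mul_of_nonneg_left ih.1 hb
    have h3 := mul_le_mul_of_nonneg_left hθX hc
    have h4 := mul_nonneg hb (hθ.trans hθX)
    constructor <;> nlinarith [hD u hu, hE u hu]

variable {S : Type*}

section Fintype

variable [Fintype S]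

lemma W1_nonneg (μ ν : S → ℝ) : 0 ≤ W1 μ ν :=
  sum_nonneg fun _ _ => abs_nonneg _

lemma W1_self (μ : S → ℝ) : W1 μ μ = 0 := by
  simp [W1]

lemma W1_triangle (μ ν ρ : S → ℝ) : W1 μ ρ ≤ W1 μ ν + W1 ν ρ := by
  rw [W1, W1, W1, ← sum_add_distrib]
  exact sum_le_sum fun x _ => abs_sub_le _ _ _

lemma W1_le_two {μ ν : S → ℝ} (hμ : IsProb μ) (hν : IsProb ν) : W1 μ ν ≤ 2 :=
  calc W1 μ ν ≤ ∑ x, (μ x + ν x) := sum_le_sum fun x _ => by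
        simpa [abs_of_nonneg (hμ.1 x), abs_of_nonneg (hν.1 x)] using abs_sub (μ x) (ν x)
    _ = 2 := by rw [sum_add_distrib, hμ.2, hν.2]; norm_num

lemma IsProb.le_one {μ : S → ℝ} (hμ : IsProb μ) (x : S) : μ x ≤ 1 :=
  hμ.2 ▸ single_le_sum (fun y _ => hμ.1 y) (mem_univ x)

lemma sum_mul_abs_le_sqrt_sum_mul_sq {p : S → ℝ} (hp : IsProb p) (X : S → ℝ) :
    ∑ x, p x * |X x| ≤ √(∑ x, p x * X x ^ 2) := by
  have hCS := Real.sum_sqrt_mul_sqrt_le univ hp.1 fun x => mul_nonneg (hp.1 x) (sq_nonneg (X x))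
  rw [hp.2, Real.sqrt_one, one_mul] at hCS
  refine le_of_eq_of_le (sum_congr rfl fun x _ => ?_) hCS
  rw [Real.sqrt_mul (hp.1 x), Real.sqrt_sq_eq_abs, ← mul_assoc, Real.mul_self_sqrt (hp.1 x)]

end Fintype

section Mixture

variable {Ω : Type*} [Fintype Ω]

def mixture (p : Ω → ℝ) (k : Ω → S → ℝ) : S → ℝ := fun y => ∑ ω, p ω * k ω y

section Pushforward

variable [DecidableEq S]

def pushforward (f : Ω → S) (p : Ω → ℝ) : S → ℝ :=
  fun y => ∑ ω, if f ω = y then p ω else 0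

lemma pushforward_mixture {Ω' : Type*} [Fintype Ω'] (f : Ω' → S) (p : Ω → ℝ)
    (k : Ω → Ω' → ℝ) :
    pushforward f (mixture p k) = mixture p (fun ω => pushforward f (k ω)) := by
  funext y
  simp only [pushforward, mixture, mul_sum, mul_ite, mul_zero]
  rw [sum_comm]
  exact sum_congr rfl fun ω' _ => by split_ifs <;> simp

lemma pushforward_ite_eq [DecidableEq Ω] (f : Ω → S) (ω₀ : Ω) :
    pushforward f (fun ω => if ω = ω₀ then 1 else 0) =
      fun y => if y = f ω₀ then 1 else 0 := by
  funext y
  rw [pushforward, Fintype.sum_eq_single ω₀ fun ω h => by simp [h]]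
  simp [eq_comm]

end Pushforward

variable [Fintype S]

lemma sum_mixture_mul (p : Ω → ℝ) (k : Ω → S → ℝ) (φ : S → ℝ) :
    ∑ y, mixture p k y * φ y = ∑ ω, p ω * ∑ y, k ω y * φ y := by
  simp only [mixture, sum_mul, mul_sum, mul_assoc]
  exact sum_comm

lemma isProb_mixture {p : Ω → ℝ} {k : Ω → S → ℝ} (hp : IsProb p)
    (hk : ∀ ω, IsProb (k ω)) :
    IsProb (mixture p k) := by
  refine ⟨fun y => sum_nonneg fun ω _ => mul_nonneg (hp.1 ω) ((hk ω).1 y), ?_⟩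
  simp only [mixture]
  rw [sum_comm]
  simp [← mul_sum, (hk _).2, hp.2]

lemma W1_mixture_le {p : Ω → ℝ} (hp : ∀ ω, 0 ≤ p ω) (k k' : Ω → S → ℝ) :
    W1 (mixture p k) (mixture p k') ≤ ∑ ω, p ω * W1 (k ω) (k' ω) := by
  simp only [W1, mixture, mul_sum]
  rw [sum_comm]
  refine sum_le_sum fun y _ => ?_
  rw [← sum_sub_distrib]
  refine (abs_sum_le_sum_abs _ _).trans_eq (sum_congr rfl fun ω _ => ?_)
  rw [← mul_sub, abs_mul, abs_of_nonneg (hp ω)]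

lemma W1_mixture_mixture_le {k : Ω → S → ℝ} (hk : ∀ ω, IsProb (k ω))
    (p p' : Ω → ℝ) :
    W1 (mixture p k) (mixture p' k) ≤ W1 p p' := by
  simp only [W1, mixture]
  calc ∑ y, |∑ ω, p ω * k ω y - ∑ ω, p' ω * k ω y|
      ≤ ∑ y, ∑ ω, |p ω - p' ω| * k ω y := sum_le_sum fun y _ => by
        rw [← sum_sub_distrib]
        refine (abs_sum_le_sum_abs _ _).trans_eq (sum_congr rfl fun ω _ => ?_)
        rw [← sub_mul, abs_mul, abs_of_nonneg ((hk ω).1 y)]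
    _ = ∑ ω, |p ω - p' ω| := by
        rw [sum_comm]
        simp [← mul_sum, (hk _).2]

variable [DecidableEq S]

lemma mixture_pushforward (f : Ω → S) (p : Ω → ℝ) (k : S → S → ℝ) :
    mixture (pushforward f p) k = mixture p (fun ω => k (f ω)) := by
  funext y
  simp only [mixture, pushforward, sum_mul, ite_mul, zero_mul]
  rw [sum_comm]
  simp

end Mixture

section Empirical

variable [Fintype S] {N : ℕ}

noncomputable def avgMeasure (g : Fin N → S → ℝ) : S → ℝ := fun y => (∑ j, g j y) / N

lemma W1_avgMeasure_le (g g' : Fin N → S → ℝ) :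
    W1 (avgMeasure g) (avgMeasure g') ≤ (∑ j, W1 (g j) (g' j)) / N := by
  simp only [W1, avgMeasure, ← sub_div, abs_div, Nat.abs_cast, ← sum_div]
  refine div_le_div_of_nonneg_right ?_ (Nat.cast_nonneg N)
  rw [sum_comm]
  exact sum_le_sum fun y _ => by rw [← sum_sub_distrib]; exact abs_sum_le_sum_abs _ _

variable [DecidableEq S]

lemma isProb_ite_eq (x₀ : S) : IsProb fun x => if x = x₀ then (1 : ℝ) else 0 :=
  ⟨fun x => by positivity, by simp⟩

lemma isProb_emp (hN : 0 < N) (w : Fin N → S) : IsProb (emp w) := by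
  refine ⟨fun x => by unfold emp; positivity, ?_⟩
  simp only [emp, ← sum_div]
  rw [sum_comm]
  simp [hN.ne']

lemma mixture_emp (w : Fin N → S) (k : S → S → ℝ) :
    mixture (emp w) k = avgMeasure (fun j => k (w j)) := by
  funext y
  simp only [mixture, emp, avgMeasure, div_mul_eq_mul_div, ← sum_div, sum_mul, ite_mul,
    one_mul, zero_mul]
  rw [sum_comm]
  simp

end Empirical

section Product

variable [Fintype S] {ι : Type*} [Fintype ι] [DecidableEq ι]

lemma sum_prod_mul_prod (g φ : ι → S → ℝ) :
    ∑ z : ι → S, (∏ k, g k (z k)) * ∏ k, φ k (z k) = ∏ k, ∑ x, g k x * φ k x := by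
  simp only [← prod_mul_distrib]
  exact (Fintype.prod_sum fun k x => g k x * φ k x).symm

lemma isProb_prod {g : ι → S → ℝ} (hg : ∀ k, IsProb (g k)) :
    IsProb fun z : ι → S => ∏ k, g k (z k) := by
  refine ⟨fun z => prod_nonneg fun k _ => (hg k).1 (z k), ?_⟩
  rw [← Fintype.prod_sum]
  exact prod_eq_one fun k _ => (hg k).2

lemma sum_prod_mul_apply_mul_apply {g : ι → S → ℝ} (hg : ∀ k, ∑ x, g k x = 1) (j k : ι)
    (φ ψ : S → ℝ) :
    ∑ z : ι → S, (∏ m, g m (z m)) * (φ (z j) * ψ (z k)) =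
      if j = k then ∑ x, g j x * (φ x * ψ x)
      else (∑ x, g j x * φ x) * ∑ x, g k x * ψ x := by
  set F : ι → S → ℝ := fun m x => (if m = j then φ x else 1) * (if m = k then ψ x else 1)
  have hF : ∀ z : ι → S, φ (z j) * ψ (z k) = ∏ m, F m (z m) := fun z => by
    simp only [F]
    rw [prod_mul_distrib, prod_ite_eq' univ j (fun m => φ (z m)),
      prod_ite_eq' univ k (fun m => ψ (z m))]
    simp
  simp_rw [hF, sum_prod_mul_prod]
  split_ifs with hjk
  · subst hjk
    rw [Fintype.prod_eq_single j fun m hm => by simp [F, hm, hg m]]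
    simp [F]
  · have hfac : ∀ m, ∑ x, g m x * F m x =
        (if m = j then ∑ x, g j x * φ x else 1) *
          (if m = k then ∑ x, g k x * ψ x else 1) := by
      intro m
      by_cases hmj : m = j
      · subst hmj; simp [F, hjk]
      · by_cases hmk : m = k
        · subst hmk; simp [F, hmj]
        · simp [F, hmj, hmk, hg m]
    simp_rw [hfac, prod_mul_distrib, prod_ite_eq', if_pos (mem_univ _)]

lemma sum_prod_mul_sq_sum_le {g : ι → S → ℝ} (hg : ∀ k, IsProb (g k))
    {ξ : ι → S → ℝ} (hmean : ∀ k, ∑ x, g k x * ξ k x = 0) (hξ : ∀ k x, ξ k x ^ 2 ≤ 1) :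
    ∑ z : ι → S, (∏ m, g m (z m)) * (∑ k, ξ k (z k)) ^ 2 ≤ Fintype.card ι := by
  have hcov : ∀ j k, ∑ z : ι → S, (∏ m, g m (z m)) * (ξ j (z j) * ξ k (z k)) ≤
      if j = k then 1 else 0 := by
    intro j k
    rw [sum_prod_mul_apply_mul_apply (fun k => (hg k).2)]
    split_ifs with hjk
    · subst hjk
      calc ∑ x, g j x * (ξ j x * ξ j x) ≤ ∑ x, g j x * 1 :=
            sum_le_sum fun x _ => mul_le_mul_of_nonneg_left (by nlinarith [hξ j x]) ((hg j).1 x)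
        _ = 1 := by simp [(hg j).2]
    · simp [hmean]
  calc ∑ z : ι → S, (∏ m, g m (z m)) * (∑ k, ξ k (z k)) ^ 2
      = ∑ j, ∑ k, ∑ z : ι → S, (∏ m, g m (z m)) * (ξ j (z j) * ξ k (z k)) := by
        simp_rw [sq, sum_mul_sum, mul_sum]
        rw [sum_comm]
        exact sum_congr rfl fun j _ => sum_comm
    _ ≤ ∑ j : ι, ∑ k : ι, if j = k then (1 : ℝ) else 0 :=
        sum_le_sum fun j _ => sum_le_sum fun k _ => hcov j k
    _ = Fintype.card ι := by simp

variable [DecidableEq S]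

lemma pushforward_apply_prod {g : ι → S → ℝ} (hg : ∀ k, ∑ x, g k x = 1) (j : ι) :
    pushforward (fun z : ι → S => z j) (fun z => ∏ k, g k (z k)) = g j := by
  funext y
  simpa [pushforward] using
    sum_prod_mul_apply_mul_apply hg j j (fun x => if x = y then 1 else 0) fun _ => 1

end Product

section Fluctuation

variable [Fintype S] [DecidableEq S] {N : ℕ}

lemma sum_prod_mul_abs_emp_sub_avgMeasure_le (hN : 0 < N) {g : Fin N → S → ℝ}
    (hg : ∀ k, IsProb (g k)) (y : S) :
    ∑ z : Fin N → S, (∏ k, g k (z k)) * |emp z y - avgMeasure g y| ≤ 1 / √N := by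
  set ξ : Fin N → S → ℝ := fun k x => (if x = y then 1 else 0) - g k y
  have hdev : ∀ z : Fin N → S, emp z y - avgMeasure g y = (∑ k, ξ k (z k)) / N := fun z => by
    simp only [emp, avgMeasure, ξ, sum_sub_distrib, sub_div]
  have hmean : ∀ k, ∑ x, g k x * ξ k x = 0 := fun k => by
    simp [ξ, mul_sub, sum_sub_distrib, ← sum_mul, (hg k).2]
  have hξ : ∀ k x, ξ k x ^ 2 ≤ 1 := fun k x => by
    have h0 := (hg k).1 y
    have h1 := (hg k).le_one y
    simp only [ξ]
    split_ifs <;> nlinarith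
  have hvar := sum_prod_mul_sq_sum_le hg hmean hξ
  rw [Fintype.card_fin] at hvar
  calc ∑ z : Fin N → S, (∏ k, g k (z k)) * |emp z y - avgMeasure g y|
      = ∑ z : Fin N → S, (∏ k, g k (z k)) * |(∑ k, ξ k (z k)) / N| := by simp_rw [hdev]
    _ ≤ √(∑ z : Fin N → S, (∏ k, g k (z k)) * ((∑ k, ξ k (z k)) / N) ^ 2) :=
        sum_mul_abs_le_sqrt_sum_mul_sq (isProb_prod hg) _
    _ = √(∑ z : Fin N → S, (∏ k, g k (z k)) * (∑ k, ξ k (z k)) ^ 2) / N := by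
        simp_rw [div_pow, ← mul_div_assoc, ← sum_div]
        rw [Real.sqrt_div' _ (by positivity), Real.sqrt_sq (Nat.cast_nonneg N)]
    _ ≤ √N / N := by gcongr
    _ = 1 / √N := Real.sqrt_div_self'

lemma sum_prod_mul_W1_emp_le (hN : 0 < N) {g : Fin N → S → ℝ} (hg : ∀ k, IsProb (g k))
    (ν : S → ℝ) :
    ∑ z : Fin N → S, (∏ k, g k (z k)) * W1 (emp z) ν ≤
      Fintype.card S / √N + W1 (avgMeasure g) ν := by
  have hP := isProb_prod hg
  calc ∑ z : Fin N → S, (∏ k, g k (z k)) * W1 (emp z) ν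
      ≤ ∑ z : Fin N → S,
          (∏ k, g k (z k)) * (W1 (emp z) (avgMeasure g) + W1 (avgMeasure g) ν) :=
        sum_le_sum fun z _ => mul_le_mul_of_nonneg_left (W1_triangle _ _ _) (hP.1 z)
    _ = ∑ y, ∑ z : Fin N → S, (∏ k, g k (z k)) * |emp z y - avgMeasure g y|
          + W1 (avgMeasure g) ν := by
        simp only [mul_add, sum_add_distrib, ← sum_mul, hP.2, one_mul]
        congr 1
        simp only [W1, mul_sum]
        exact sum_comm
    _ ≤ ∑ _y : S, 1 / √N + W1 (avgMeasure g) ν := by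
        gcongr with y
        exact sum_prod_mul_abs_emp_sub_avgMeasure_le hN hg y
    _ = Fintype.card S / √N + W1 (avgMeasure g) ν := by
        rw [sum_const, card_univ, nsmul_eq_mul, mul_one_div]

end Fluctuation

section Dynamics

variable {A : Type*} [Fintype S]

def IsProbKernel (q : ℕ → S → (S → ℝ) → A → S → ℝ) : Prop :=
  ∀ s x μ a, IsProb μ → IsProb (q s x μ a)

def KernelLipschitzWith [PseudoMetricSpace A] (Lq : ℝ)
    (q : ℕ → S → (S → ℝ) → A → S → ℝ) : Prop :=
  ∀ s x μ ν a b y, IsProb μ → IsProb ν →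
    |q s x μ a y - q s x ν b y| ≤ Lq * (W1 μ ν + dist a b)

lemma W1_kernel_le_of_lipCtrl [PseudoMetricSpace A] {q : ℕ → S → (S → ℝ) → A → S → ℝ} {Lq L : ℝ}
    (hqLip : KernelLipschitzWith Lq q) {β : ℕ → S → (S → ℝ) → A} (hβ : LipCtrl L β)
    (u : ℕ) (x : S) {ρ σ : S → ℝ}
    (hρ : IsProb ρ) (hσ : IsProb σ) :
    W1 (q u x ρ (β u x ρ)) (q u x σ (β u x σ)) ≤
      Fintype.card S * |Lq| * (1 + |L|) * W1 ρ σ := by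
  have hW := W1_nonneg ρ σ
  have hdist : dist (β u x ρ) (β u x σ) ≤ |L| * W1 ρ σ :=
    (hβ u x ρ σ).trans (mul_le_mul_of_nonneg_right (le_abs_self L) hW)
  calc W1 (q u x ρ (β u x ρ)) (q u x σ (β u x σ))
      ≤ ∑ _y : S, |Lq| * ((1 + |L|) * W1 ρ σ) := sum_le_sum fun y _ =>
        (hqLip u x ρ σ _ _ y hρ hσ).trans <|
          (mul_le_mul_of_nonneg_right (le_abs_self Lq) (by positivity)).trans <|
            mul_le_mul_of_nonneg_left (by linarith) (abs_nonneg Lq)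
    _ = Fintype.card S * |Lq| * (1 + |L|) * W1 ρ σ := by
        rw [sum_const, card_univ, nsmul_eq_mul]
        ring

variable {q : ℕ → S → (S → ℝ) → A → S → ℝ} {α : ℕ → S → (S → ℝ) → A} {t u : ℕ}

lemma flowM_of_le {μ : S → ℝ} (h : u ≤ t) : flowM q α t μ u = μ := by
  cases u with
  | zero => rfl
  | succ u => rw [flowM, if_pos h]

lemma flowM_succ {μ : S → ℝ} (h : t ≤ u) :
    flowM q α t μ (u + 1) =
      mixture (flowM q α t μ u)
        fun x => q u x (flowM q α t μ u) (α u x (flowM q α t μ u)) := by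
  rw [flowM, if_neg (by omega)]
  rfl

lemma isProb_flowM (hq : IsProbKernel q) {μ : S → ℝ} (hμ : IsProb μ) (u : ℕ) :
    IsProb (flowM q α t μ u) := by
  induction u with
  | zero => rwa [flowM_of_le (Nat.zero_le t)]
  | succ u ih =>
    by_cases h : u + 1 ≤ t
    · rwa [flowM_of_le h]
    · rw [flowM_succ (by omega)]
      exact isProb_mixture ih fun x => hq _ _ _ _ ih

variable [DecidableEq S]

lemma chainM_of_le {ν : ℕ → S → ℝ} {x₀ : S} (h : u ≤ t) :
    chainM q ν α t x₀ u = fun x => if x = x₀ then 1 else 0 := by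
  cases u with
  | zero => rfl
  | succ u => rw [chainM, if_pos h]

lemma chainM_succ {ν : ℕ → S → ℝ} {x₀ : S} (h : t ≤ u) :
    chainM q ν α t x₀ (u + 1) =
      mixture (chainM q ν α t x₀ u) fun x => q u x (ν u) (α u x (ν u)) := by
  rw [chainM, if_neg (by omega)]
  rfl

variable {N : ℕ} {αv : Fin N → ℕ → S → (S → ℝ) → A} {xv : Fin N → S}

lemma jointFlow_of_le (h : u ≤ t) :
    jointFlow q αv t xv u = fun z => if z = xv then 1 else 0 := by
  cases u with
  | zero => rfl
  | succ u => rw [jointFlow, if_pos h]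

lemma jointFlow_succ (h : t ≤ u) :
    jointFlow q αv t xv (u + 1) = mixture (jointFlow q αv t xv u)
      fun w z => ∏ j, q u (w j) (emp w) (αv j u (w j) (emp w)) (z j) := by
  rw [jointFlow, if_neg (by omega)]
  rfl

lemma isProb_jointFlow (hq : IsProbKernel q) (hN : 0 < N) (u : ℕ) :
    IsProb (jointFlow q αv t xv u) := by
  induction u with
  | zero => rw [jointFlow_of_le (Nat.zero_le t)]; exact isProb_ite_eq xv
  | succ u ih =>
    by_cases h : u + 1 ≤ t
    · rw [jointFlow_of_le h]; exact isProb_ite_eq xv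
    · rw [jointFlow_succ (by omega)]
      exact isProb_mixture ih fun w => isProb_prod fun j => hq _ _ _ _ (isProb_emp hN w)

end Dynamics

section Distances

variable {A : Type*} [Fintype S] [DecidableEq S] {N : ℕ}

noncomputable def empiricalDist (q : ℕ → S → (S → ℝ) → A → S → ℝ)
    (α αt : ℕ → S → (S → ℝ) → A) (t : ℕ) (xv : Fin N → S) (μ : S → ℝ) (i : Fin N)
    (u : ℕ) : ℝ :=
  ∑ w, jointFlow q (replaceI α αt i) t xv u w * W1 (emp w) (flowM q α t μ u)

noncomputable def marginalDist (q : ℕ → S → (S → ℝ) → A → S → ℝ)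
    (α αt : ℕ → S → (S → ℝ) → A) (t : ℕ) (xv : Fin N → S) (μ : S → ℝ) (i : Fin N)
    (u : ℕ) : ℝ :=
  W1 (pushforward (fun w => w i) (jointFlow q (replaceI α αt i) t xv u))
    (chainM q (flowM q α t μ) αt t (xv i) u)

variable {q : ℕ → S → (S → ℝ) → A → S → ℝ} {α αt : ℕ → S → (S → ℝ) → A} {t : ℕ}
  {xv : Fin N → S} {μ : S → ℝ} {i : Fin N}

lemma empiricalDist_start : empiricalDist q α αt t xv μ i t = W1 (emp xv) μ := by
  simp [empiricalDist, jointFlow_of_le, flowM_of_le]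

lemma marginalDist_start : marginalDist q α αt t xv μ i t = 0 := by
  rw [marginalDist, jointFlow_of_le le_rfl, chainM_of_le le_rfl, pushforward_ite_eq, W1_self]

end Distances

section OneStep

variable {A : Type*} [Fintype S] [DecidableEq S] [PseudoMetricSpace A]
  {q : ℕ → S → (S → ℝ) → A → S → ℝ} {Lq L : ℝ} {α αt : ℕ → S → (S → ℝ) → A}
  {t u N : ℕ} {xv : Fin N → S} {μ : S → ℝ} {i : Fin N}

lemma W1_avgMeasure_flowM_succ_le (hq : IsProbKernel q) (hqLip : KernelLipschitzWith Lq q)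
    (hα : LipCtrl L α) (hN : 0 < N) (hμ : IsProb μ) (htu : t ≤ u) (w : Fin N → S) :
    W1 (avgMeasure fun j => q u (w j) (emp w) (replaceI α αt i j u (w j) (emp w)))
        (flowM q α t μ (u + 1)) ≤
      (1 + Fintype.card S * |Lq| * (1 + |L|)) * W1 (emp w) (flowM q α t μ u) + 2 / N := by
  set m := flowM q α t μ
  set K := Fintype.card S * |Lq| * (1 + |L|)
  set k : S → S → ℝ := fun x => q u x (emp w) (α u x (emp w))
  have hw := isProb_emp hN w
  have hm : IsProb (m u) := isProb_flowM hq hμ u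
  have hdeviate : W1 (avgMeasure fun j => q u (w j) (emp w) (replaceI α αt i j u (w j) (emp w)))
      (mixture (emp w) k) ≤ 2 / N := by
    rw [mixture_emp]
    refine (W1_avgMeasure_le _ _).trans ?_
    rw [Fintype.sum_eq_single i fun j hj => by simp [k, replaceI, hj, W1_self]]
    exact div_le_div_of_nonneg_right (W1_le_two (hq _ _ _ _ hw) (hq _ _ _ _ hw)) N.cast_nonneg
  have hdrift : W1 (mixture (emp w) k) (m (u + 1)) ≤ (1 + K) * W1 (emp w) (m u) := by
    rw [show m (u + 1) = _ from flowM_succ htu]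
    calc W1 (mixture (emp w) k) (mixture (m u) fun x => q u x (m u) (α u x (m u)))
        ≤ W1 (mixture (emp w) k) (mixture (m u) k)
          + W1 (mixture (m u) k) (mixture (m u) fun x => q u x (m u) (α u x (m u))) :=
          W1_triangle _ _ _
      _ ≤ W1 (emp w) (m u) + ∑ x, m u x * (K * W1 (emp w) (m u)) :=
          add_le_add (W1_mixture_mixture_le (fun x => hq _ _ _ _ hw) _ _)
            ((W1_mixture_le hm.1 _ _).trans <| sum_le_sum fun x _ =>
              mul_le_mul_of_nonneg_left (W1_kernel_le_of_lipCtrl hqLip hα u x hw hm) (hm.1 x))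
      _ = (1 + K) * W1 (emp w) (m u) := by rw [← sum_mul, hm.2]; ring
  linarith [W1_triangle
    (avgMeasure fun j => q u (w j) (emp w) (replaceI α αt i j u (w j) (emp w)))
    (mixture (emp w) k) (m (u + 1))]

lemma one_div_natCast_le_one_div_sqrt (hN : 0 < N) : 1 / (N : ℝ) ≤ 1 / √N := by
  have h1 : (1 : ℝ) ≤ N := by exact_mod_cast hN
  exact one_div_le_one_div_of_le (by positivity) (Real.sqrt_le_self_iff.mpr (Or.inr h1))

theorem empiricalDist_succ_le (hq : IsProbKernel q) (hqLip : KernelLipschitzWith Lq q)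
    (hα : LipCtrl L α) (hN : 0 < N) (hμ : IsProb μ) (htu : t ≤ u) :
    empiricalDist q α αt t xv μ i (u + 1) ≤
      (1 + Fintype.card S * |Lq| * (1 + |L|)) * empiricalDist q α αt t xv μ i u +
        (Fintype.card S + 2) / √N := by
  unfold empiricalDist
  set K := Fintype.card S * |Lq| * (1 + |L|)
  set P := jointFlow q (replaceI α αt i) t xv
  have hP : IsProb (P u) := isProb_jointFlow hq hN u
  have hstep : ∀ w : Fin N → S,
      ∑ z : Fin N → S, (∏ j, q u (w j) (emp w) (replaceI α αt i j u (w j) (emp w)) (z j)) *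
          W1 (emp z) (flowM q α t μ (u + 1)) ≤
        (1 + K) * W1 (emp w) (flowM q α t μ u) + (Fintype.card S + 2) / √N := fun w => by
    have hfluct := sum_prod_mul_W1_emp_le hN
      (g := fun j => q u (w j) (emp w) (replaceI α αt i j u (w j) (emp w)))
      (fun j => hq _ _ _ _ (isProb_emp hN w))
      (flowM q α t μ (u + 1))
    have hdrift := W1_avgMeasure_flowM_succ_le (αt := αt) (i := i) hq hqLip hα hN hμ htu w
    have hN' := one_div_natCast_le_one_div_sqrt hN
    rw [add_div]
    linarith [show (2 : ℝ) / N = 2 * (1 / N) by ring,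
      show (2 : ℝ) / √N = 2 * (1 / √N) by ring]
  rw [show P (u + 1) = _ from jointFlow_succ htu, sum_mixture_mul]
  calc ∑ w, P u w * ∑ z : Fin N → S,
          (∏ j, q u (w j) (emp w) (replaceI α αt i j u (w j) (emp w)) (z j)) *
            W1 (emp z) (flowM q α t μ (u + 1))
      ≤ ∑ w, P u w * ((1 + K) * W1 (emp w) (flowM q α t μ u) + (Fintype.card S + 2) / √N) :=
        sum_le_sum fun w _ => mul_le_mul_of_nonneg_left (hstep w) (hP.1 w)
    _ = (1 + K) * ∑ w, P u w * W1 (emp w) (flowM q α t μ u)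
          + (∑ w, P u w) * ((Fintype.card S + 2) / √N) := by
        rw [mul_sum, sum_mul, ← sum_add_distrib]
        exact sum_congr rfl fun w _ => by ring
    _ = (1 + K) * ∑ w, P u w * W1 (emp w) (flowM q α t μ u) + (Fintype.card S + 2) / √N := by
        rw [hP.2, one_mul]

theorem marginalDist_succ_le (hq : IsProbKernel q) (hqLip : KernelLipschitzWith Lq q)
    (hαt : LipCtrl L αt) (hN : 0 < N) (hμ : IsProb μ) (htu : t ≤ u) :
    marginalDist q α αt t xv μ i (u + 1) ≤
      Fintype.card S * |Lq| * (1 + |L|) * empiricalDist q α αt t xv μ i u +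
        marginalDist q α αt t xv μ i u := by
  unfold marginalDist empiricalDist
  set K := Fintype.card S * |Lq| * (1 + |L|)
  set P := jointFlow q (replaceI α αt i) t xv
  set m := flowM q α t μ
  set r : (S → ℝ) → S → S → ℝ := fun ρ x => q u x ρ (αt u x ρ)
  have hP : IsProb (P u) := isProb_jointFlow hq hN u
  have hm : IsProb (m u) := isProb_flowM hq hμ u
  have hmarginal :
      pushforward (fun w => w i) (P (u + 1)) = mixture (P u) fun w => r (emp w) (w i) := by
    rw [show P (u + 1) = _ from jointFlow_succ htu, pushforward_mixture]
    congr 1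
    funext w
    rw [pushforward_apply_prod fun j => (hq _ _ _ _ (isProb_emp hN w)).2]
    simp [r, replaceI]
  rw [hmarginal, chainM_succ htu]
  calc W1 (mixture (P u) fun w => r (emp w) (w i)) (mixture (chainM q m αt t (xv i) u) (r (m u)))
      ≤ W1 (mixture (P u) fun w => r (emp w) (w i)) (mixture (P u) fun w => r (m u) (w i))
        + W1 (mixture (P u) fun w => r (m u) (w i))
            (mixture (chainM q m αt t (xv i) u) (r (m u))) :=
        W1_triangle _ _ _
    _ ≤ ∑ w, P u w * (K * W1 (emp w) (m u))
        + W1 (pushforward (fun w => w i) (P u)) (chainM q m αt t (xv i) u) := by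
        gcongr
        · exact (W1_mixture_le hP.1 _ _).trans <| sum_le_sum fun w _ =>
            mul_le_mul_of_nonneg_left
              (W1_kernel_le_of_lipCtrl hqLip hαt u (w i) (isProb_emp hN w) hm) (hP.1 w)
        · rw [← mixture_pushforward]
          exact W1_mixture_mixture_le (fun x => hq _ _ _ _ hm) _ _
    _ = K * ∑ w, P u w * W1 (emp w) (m u)
        + W1 (pushforward (fun w => w i) (P u)) (chainM q m αt t (xv i) u) := by
        rw [mul_sum]
        exact congrArg (· + _) (sum_congr rfl fun w _ => by ring)

end OneStep

end MFGSetValue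

theorem empirical_measure_convergence_general
    {S A : Type*} [Fintype S] [DecidableEq S] [PseudoMetricSpace A]
    (T : ℕ) (Lq : ℝ)
    (L : ℝ) :
    ∃ C : ℝ, 0 < C ∧
      ∀ (q : ℕ → S → (S → ℝ) → A → S → ℝ),
        (∀ s x μ a y, IsProb μ → 0 < q s x μ a y ∧ q s x μ a y < 1) →
        (∀ s x μ a, IsProb μ → ∑ y, q s x μ a y = 1) →
        (∀ s x μ ν a b y, IsProb μ → IsProb ν →
          |q s x μ a y - q s x ν b y| ≤ Lq * (W1 μ ν + dist a b)) →
        ∀ (N : ℕ), 0 < N →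
        ∀ (t : ℕ), t ≤ T →
        ∀ (xv : Fin N → S), (∀ x, 0 < emp xv x) →
        ∀ (μ : S → ℝ), IsProb μ → (∀ x, 0 < μ x) →
        ∀ (α αt : ℕ → S → (S → ℝ) → A), LipCtrl L α → LipCtrl L αt →
        ∀ (s : ℕ), t ≤ s → s ≤ T →
        ∀ (i : Fin N),
          (∑ w : Fin N → S,
              jointFlow q (replaceI α αt i) t xv s w * W1 (emp w) (flowM q α t μ s))
            ≤ C * (W1 (emp xv) μ + 1 / Real.sqrt N) ∧
          W1 (fun y => ∑ w : Fin N → S,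
                if w i = y then jointFlow q (replaceI α αt i) t xv s w else 0)
              (chainM q (flowM q α t μ) αt t (xv i) s)
            ≤ C * (W1 (emp xv) μ + 1 / Real.sqrt N) := by
  set K : ℝ := Fintype.card S * |Lq| * (1 + |L|)
  set M : ℝ := (1 + K) + K + (Fintype.card S + 2) + 1
  have hK : 0 ≤ K := by positivity
  refine ⟨M ^ T, by positivity, ?_⟩
  intro q hq01 hqsum hqLip N hN t htT xv _ μ hμ _ α αt hα hαt s hts hsT i
  have hq : IsProbKernel q := fun u x ν a hν =>
    ⟨fun y => (hq01 u x ν a y hν).1.le, hqsum u x ν a hν⟩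
  set θ := W1 (emp xv) μ + 1 / √N
  have hθ : 1 / √N ≤ θ := le_add_of_nonneg_left (W1_nonneg _ _)
  have hθ₀ : 0 ≤ θ := hθ.trans' (by positivity)
  obtain ⟨hD, hE⟩ := le_pow_mul_of_recursion (a := 1 + K) (b := K) (c := Fintype.card S + 2)
    (D := empiricalDist q α αt t xv μ i) (E := marginalDist q α αt t xv μ i)
    (by positivity) hK (by positivity) hθ₀
    (empiricalDist_start.trans_le (le_add_of_nonneg_right (by positivity)))
    (marginalDist_start.trans_le hθ₀)
    (fun u hu => (empiricalDist_succ_le hq hqLip hα hN hμ hu).trans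
      (by rw [div_eq_mul_one_div]; gcongr))
    (fun u hu => marginalDist_succ_le hq hqLip hαt hN hμ hu) hts
  have hpow : M ^ (s - t) ≤ M ^ T :=
    pow_le_pow_right₀ (le_add_of_nonneg_left (by positivity)) (by omega)
  exact ⟨hD.trans (mul_le_mul_of_nonneg_right hpow hθ₀),
    hE.trans (mul_le_mul_of_nonneg_right hpow hθ₀)⟩

/-- Theorem 3.3.  Assume `q` is uniformly Lipschitz in `(μ,a)` with
constant `L_q`.  For any `L ≥ 0` there is a constant `C_L` (depending only on `T`,
`|𝕊|`, `L_q`, `L`) such that for all `t ∈ 𝕋`, `x⃗ ∈ 𝕊^N₀`, `μ ∈ 𝒫₀(𝕊)`,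
`α, α̃ ∈ 𝒜^L_state`, `t ≤ s ≤ T` and player `i`:
(i)  `E^{ℙ^{t,x⃗,(α,α̃)_i}}[W₁(μ^N_s, μ^α_s)] ≤ C_L θ_N`;
(ii) `W₁(ℙ^{t,x⃗,(α,α̃)_i}∘(X^i_s)^{-1}, ℙ^{μ^α;t,x_i,α̃}∘X_s^{-1}) ≤ C_L θ_N`;
where `θ_N = W₁(μ^N_{x⃗}, μ) + 1/√N`. -/
theorem empirical_measure_convergence
    {S A : Type*} [Fintype S] [DecidableEq S] [PseudoMetricSpace A]
    (T : ℕ) (Lq : ℝ)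
    (L : ℝ) (hL : 0 ≤ L) :
    ∃ C : ℝ, 0 < C ∧
      ∀ (q : ℕ → S → (S → ℝ) → A → S → ℝ),
        (∀ s x μ a y, IsProb μ → 0 < q s x μ a y ∧ q s x μ a y < 1) →
        (∀ s x μ a, IsProb μ → ∑ y, q s x μ a y = 1) →
        (∀ s x μ ν a b y, IsProb μ → IsProb ν →
          |q s x μ a y - q s x ν b y| ≤ Lq * (W1 μ ν + dist a b)) →
        ∀ (N : ℕ), 0 < N →
        ∀ (t : ℕ), t ≤ T →
        ∀ (xv : Fin N → S), (∀ x, 0 < emp xv x) →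
        ∀ (μ : S → ℝ), IsProb μ → (∀ x, 0 < μ x) →
        ∀ (α αt : ℕ → S → (S → ℝ) → A), LipCtrl L α → LipCtrl L αt →
        ∀ (s : ℕ), t ≤ s → s ≤ T →
        ∀ (i : Fin N),
          (∑ w : Fin N → S,
              jointFlow q (replaceI α αt i) t xv s w * W1 (emp w) (flowM q α t μ s))
            ≤ C * (W1 (emp xv) μ + 1 / Real.sqrt N) ∧
          W1 (fun y => ∑ w : Fin N → S,
                if w i = y then jointFlow q (replaceI α αt i) t xv s w else 0)
              (chainM q (flowM q α t μ) αt t (xv i) s)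
            ≤ C * (W1 (emp xv) μ + 1 / Real.sqrt N) :=
  empirical_measure_convergence_general T Lq L
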